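/- Let q be a nondegenerate symmetric bilinear form on a real vector space V of dimension n, with maximal positive-definite subspace of dimension p. If v₁, …, vₘ ∈ V are pairwise orthogonal vectors with q(vᵢ, vᵢ) ≥ 0 for all i, and at most one linear relation holds among them, then m ≤ p + 1. -/

import Mathlib

open Module Submodule

lemma stmt16_aux_pair {ι : Type*} [Fintype ι] (K : Submodule ℝ (ι → ℝ))
    (hK : 2 ≤ Module.finrank ℝ K) :
    ∃ c d : ι → ℝ, c ∈ K ∧ d ∈ K ∧
      ∀ a b : ℝ, (∀ i, a * c i + b * d i = 0) → a = 0 ∧ b = 0 := by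
  classical
  have : FiniteDimensional ℝ K := inferInstance
  let bb := Module.finBasis ℝ K
  let i0 : Fin (Module.finrank ℝ K) := ⟨0, by omega⟩
  let i1 : Fin (Module.finrank ℝ K) := ⟨1, by omega⟩
  have hne : i0 ≠ i1 := by simp [i0, i1, Fin.ext_iff]
  refine ⟨(bb i0 : ι → ℝ), (bb i1 : ι → ℝ), (bb i0).2, (bb i1).2, ?_⟩
  intro a b hab
  have hzero : a • bb i0 + b • bb i1 = 0 := by
    apply Subtype.ext
    funext i
    have := hab i
    simpa [smul_eq_mul] using this
  have hli := linearIndependent_iff'.1 bb.linearIndependent {i0, i1}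
    (fun i => if i = i0 then a else b) ?_
  · constructor
    · simpa using hli i0 (by simp)
    · have := hli i1 (by simp)
      simpa [hne.symm] using this
  · rw [Finset.sum_pair hne]
    simpa [hne.symm] using hzero

lemma stmt16_diag_sum {V : Type*} [AddCommGroup V] [Module ℝ V]
    (q : V →ₗ[ℝ] V →ₗ[ℝ] ℝ) {ι : Type*} [Fintype ι] (f : ι → V)
    (h : ∀ i j : ι, i ≠ j → q (f i) (f j) = 0) (c : ι → ℝ) :
    q (∑ i, c i • f i) (∑ i, c i • f i) = ∑ i, c i * c i * q (f i) (f i) := by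
  classical
  have hinner : ∀ i, q (f i) (∑ j, c j • f j) = c i * q (f i) (f i) := by
    intro i
    rw [map_sum, Finset.sum_eq_single i]
    · rw [map_smul, smul_eq_mul]
    · intro j _ hj
      rw [map_smul, smul_eq_mul, h i j (Ne.symm hj), mul_zero]
    · intro h'; exact absurd (Finset.mem_univ i) h'
  rw [map_sum q (fun i => c i • f i) Finset.univ, LinearMap.sum_apply]
  refine Finset.sum_congr rfl fun i _ => ?_
  rw [map_smul, LinearMap.smul_apply, hinner i, smul_eq_mul, mul_assoc]

/-- let `q` be a nondegenerate symmetric bilinear form on a real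
vector space `V` of dimension `n` whose maximal positive-definite subspace has
dimension `p`.  If `v₁, …, vₘ` are pairwise orthogonal vectors with
`q(vᵢ, vᵢ) ≥ 0`, among which at most one linear relation holds (any two
linear relations are proportional), then `m ≤ p + 1`. -/
theorem stmt_16 (V : Type*) [AddCommGroup V] [Module ℝ V]
    [FiniteDimensional ℝ V] (n : ℕ) (hn : Module.finrank ℝ V = n)
    (q : V →ₗ[ℝ] V →ₗ[ℝ] ℝ)
    (hsymm : ∀ a b, q a b = q b a)
    (hnd : ∀ a, (∀ b, q a b = 0) → a = 0)
    (p : ℕ)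
    (hmax : ∃ W : Submodule ℝ V, (∀ w ∈ W, w ≠ 0 → 0 < q w w) ∧
      Module.finrank ℝ W = p ∧
      ∀ W' : Submodule ℝ V, (∀ w ∈ W', w ≠ 0 → 0 < q w w) →
        Module.finrank ℝ W' ≤ p)
    (m : ℕ) (v : Fin m → V)
    (horth : Pairwise fun i j => q (v i) (v j) = 0)
    (hnonneg : ∀ i, 0 ≤ q (v i) (v i))
    -- at most one linear relation among the `vᵢ`
    (hrel : ∀ c d : Fin m → ℝ, (∑ i, c i • v i = 0) → (∑ i, d i • v i = 0) →
      ∃ a b : ℝ, (a, b) ≠ ((0 : ℝ), (0 : ℝ)) ∧ ∀ i, a * c i + b * d i = 0) :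
    m ≤ p + 1 := by
  classical
  obtain ⟨W, hWpos, hWrank, hWmax⟩ := hmax
  have hrefl : LinearMap.BilinForm.IsRefl q := fun x y h => by rw [hsymm]; exact h
  -- index subtypes
  set pos : Fin m → Prop := fun i => 0 < q (v i) (v i) with hposdef
  have hdiagz : ∀ i : Fin m, ¬ pos i → q (v i) (v i) = 0 :=
    fun i h => le_antisymm (not_lt.1 h) (hnonneg i)
  set vp : {i // pos i} → V := fun i => v i with hvpdef
  set vz : {i // ¬ pos i} → V := fun i => v i with hvzdef
  set P : Submodule ℝ V := span ℝ (Set.range vp) with hPdef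
  set N : Submodule ℝ V := span ℝ (Set.range vz) with hNdef
  set M : Submodule ℝ V := span ℝ (Set.range v) with hMdef
  have hPM : P ≤ M := span_mono (by rintro _ ⟨i, rfl⟩; exact ⟨↑i, rfl⟩)
  have hNM : N ≤ M := span_mono (by rintro _ ⟨i, rfl⟩; exact ⟨↑i, rfl⟩)
  -- null vectors are orthogonal to everything in M
  have hq0 : ∀ (i : {i // ¬ pos i}) (j : Fin m), q (vz i) (v j) = 0 := by
    intro i j
    by_cases h : (i : Fin m) = j
    · show q (v ↑i) (v j) = 0
      rw [h]; exact hdiagz j (h ▸ i.2)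
    · exact horth h
  have hNall : ∀ y ∈ N, ∀ x ∈ M, q y x = 0 := by
    have hgen : ∀ (i : {i // ¬ pos i}), ∀ x ∈ M, q (vz i) x = 0 := by
      intro i x hx
      induction hx using Submodule.span_induction with
      | mem x hx => obtain ⟨j, rfl⟩ := hx; exact hq0 i j
      | zero => simp
      | add a b _ _ ha hb => rw [map_add, ha, hb, add_zero]
      | smul c a _ ha => rw [map_smul, ha, smul_zero]
    intro y hy
    induction hy using Submodule.span_induction with
    | mem y hy => obtain ⟨i, rfl⟩ := hy; exact hgen i
    | zero => intro x hx; simp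
    | add a b _ _ ha hb =>
        intro x hx
        rw [map_add, LinearMap.add_apply, ha x hx, hb x hx, add_zero]
    | smul c a _ ha =>
        intro x hx
        rw [map_smul, LinearMap.smul_apply, ha x hx, smul_zero]
  -- the positive vectors are linearly independent
  have hindep : LinearIndependent ℝ vp := by
    rw [linearIndependent_iff']
    intro s g hsum j hj
    have h1 : q (∑ i ∈ s, g i • vp i) (vp j) = 0 := by rw [hsum]; simp
    rw [map_sum q (fun i => g i • vp i) s, LinearMap.sum_apply] at h1
    have h2 : ∑ i ∈ s, (q (g i • vp i)) (vp j) = g j * q (vp j) (vp j) := by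
      rw [Finset.sum_eq_single_of_mem j hj]
      · rw [map_smul, LinearMap.smul_apply, smul_eq_mul]
      · intro i _ hij
        rw [map_smul, LinearMap.smul_apply, smul_eq_mul,
          horth (Subtype.coe_injective.ne hij), mul_zero]
    rw [h2] at h1
    exact (mul_eq_zero.mp h1).resolve_right (ne_of_gt j.2)
  have hPrank : finrank ℝ P = Fintype.card {i // pos i} :=
    finrank_span_eq_card hindep
  -- P is positive definite
  have hPpos : ∀ x ∈ P, x ≠ 0 → 0 < q x x := by
    intro x hx hx0
    obtain ⟨c, rfl⟩ := (mem_span_range_iff_exists_fun ℝ).1 hx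
    have horth' : ∀ i j : {i // pos i}, i ≠ j → q (vp i) (vp j) = 0 :=
      fun i j hij => horth (Subtype.coe_injective.ne hij)
    rw [stmt16_diag_sum q vp horth' c]
    have hex : ∃ j, c j ≠ 0 := by
      by_contra h
      push_neg at h
      exact hx0 (by simp [h])
    obtain ⟨j, hj⟩ := hex
    refine Finset.sum_pos' (fun i _ => mul_nonneg (mul_self_nonneg _) i.2.le) ⟨j, Finset.mem_univ j, ?_⟩
    exact mul_pos (mul_self_pos.2 hj) j.2
  -- kernel bounds
  set T : (Fin m → ℝ) →ₗ[ℝ] V := Fintype.linearCombination ℝ v with hTdef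
  have hTapp : ∀ c, T c = ∑ i, c i • v i := fun c => rfl
  set Tz : ({i // ¬ pos i} → ℝ) →ₗ[ℝ] V := Fintype.linearCombination ℝ vz with hTzdef
  have hTzapp : ∀ c, Tz c = ∑ i, c i • vz i := fun c => rfl
  have hkerz : finrank ℝ (LinearMap.ker Tz) ≤ 1 := by
    by_contra hk
    push_neg at hk
    obtain ⟨c, d, hc, hd, hcd⟩ := stmt16_aux_pair (LinearMap.ker Tz) hk
    -- extend by zero
    set c' : Fin m → ℝ := fun j => if h : pos j then 0 else c ⟨j, h⟩ with hc'def
    set d' : Fin m → ℝ := fun j => if h : pos j then 0 else d ⟨j, h⟩ with hd'def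
    have hsum : ∀ (e : {i // ¬ pos i} → ℝ)
        (e' : Fin m → ℝ), (e' = fun j => if h : pos j then 0 else e ⟨j, h⟩) →
        Tz e = 0 → ∑ i, e' i • v i = 0 := by
      intro e e' he' he
      have : ∑ i, e' i • v i = ∑ i : {i // ¬ pos i}, e i • vz i := by
        rw [← Fintype.sum_subtype_add_sum_subtype pos (fun j => e' j • v j)]
        have h1 : ∑ i : {i // pos i}, e' ↑i • v ↑i = 0 :=
          Finset.sum_eq_zero (fun i _ => by simp [he', i.2])
        rw [h1, zero_add]
        refine Finset.sum_congr rfl fun i _ => ?_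
        rw [he']
        simp [i.2, hvzdef]
      rw [this, ← hTzapp e, he]
    obtain ⟨a, b, hab, hcomb⟩ := hrel c' d' (hsum c c' rfl hc) (hsum d d' rfl hd)
    have : ∀ i : {i // ¬ pos i}, a * c i + b * d i = 0 := by
      intro i
      have := hcomb ↑i
      simpa [hc'def, hd'def, i.2] using this
    obtain ⟨ha, hb⟩ := hcd a b this
    exact hab (by rw [ha, hb])
  have hcardz : Fintype.card {i // ¬ pos i} ≤ finrank ℝ N + 1 := by
    have h1 := LinearMap.finrank_range_add_finrank_ker Tz
    rw [Module.finrank_fintype_fun_eq_card] at h1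
    have h2 : LinearMap.range Tz = N := Fintype.range_linearCombination ..
    rw [h2] at h1
    omega
  -- the orthogonal complement of W
  have hWnd : (LinearMap.BilinForm.restrict q W).Nondegenerate := by
    refine (LinearMap.IsRefl.nondegenerate_iff_separatingLeft (B := LinearMap.BilinForm.restrict q W) (fun a b h => hrefl a b h)).2 ?_
    intro x h
    have hxx : q (x : V) (x : V) = 0 := h x
    ext
    by_contra h0
    exact absurd hxx (ne_of_gt (hWpos x x.2 h0))
  set Wo : Submodule ℝ V := LinearMap.BilinForm.orthogonal q W with hWodef
  have hcompl : IsCompl W Wo :=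
    LinearMap.BilinForm.isCompl_orthogonal_of_restrict_nondegenerate hrefl hWnd
  have hrankWWo : finrank ℝ W + finrank ℝ Wo = n := by
    rw [Submodule.finrank_add_eq_of_isCompl hcompl, hn]
  -- Wo is negative semidefinite
  have hWo_nonpos : ∀ x ∈ Wo, q x x ≤ 0 := by
    intro x hx
    by_contra h
    push_neg at h
    have hx0 : x ≠ 0 := by rintro rfl; simp at h
    have hxW : x ∉ W := by
      intro hxW
      have hmem : x ∈ W ⊓ Wo := ⟨hxW, hx⟩
      rw [hcompl.inf_eq_bot] at hmem
      exact hx0 hmem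
    have hDpos : ∀ y ∈ W ⊔ (ℝ ∙ x), y ≠ 0 → 0 < q y y := by
      intro y hy hy0
      obtain ⟨w, hw, z, hz, rfl⟩ := Submodule.mem_sup.1 hy
      obtain ⟨c, rfl⟩ := Submodule.mem_span_singleton.1 hz
      have hwx : q w x = 0 := hx w hw
      have hxw : q x w = 0 := by rw [hsymm]; exact hwx
      have hq : q (w + c • x) (w + c • x) = q w w + c * c * q x x := by
        simp only [map_add, map_smul, LinearMap.add_apply, LinearMap.smul_apply,
          smul_eq_mul, hwx, hxw]
        ring
      rcases eq_or_ne w 0 with rfl | hw0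
      · have hc : c ≠ 0 := by rintro rfl; simp at hy0
        rw [hq]
        have : q (0 : V) (0 : V) = 0 := by simp
        rw [this, zero_add]
        exact mul_pos (mul_self_pos.2 hc) h
      · have h1 : 0 < q w w := hWpos w hw hw0
        have h2 : 0 ≤ c * c * q x x := mul_nonneg (mul_self_nonneg c) h.le
        rw [hq]; linarith
    have hinf : W ⊓ (ℝ ∙ x) = ⊥ := by
      rw [eq_bot_iff]
      rintro z ⟨hzW, hzx⟩
      obtain ⟨c, rfl⟩ := Submodule.mem_span_singleton.1 hzx
      rcases eq_or_ne c 0 with rfl | hc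
      · simp
      · exact absurd ((W.smul_mem_iff hc).1 hzW) hxW
    have hrankD : finrank ℝ ↥(W ⊔ (ℝ ∙ x)) = p + 1 := by
      have h1 := Submodule.finrank_sup_add_finrank_inf_eq W (ℝ ∙ x)
      rw [hinf, finrank_bot, add_zero, hWrank, finrank_span_singleton hx0] at h1
      exact h1
    have := hWmax _ hDpos
    rw [hrankD] at this
    omega
  -- Wo is negative definite
  have hWo_neg : ∀ x ∈ Wo, x ≠ 0 → q x x < 0 := by
    intro x hx hx0
    rcases (hWo_nonpos x hx).lt_or_eq with h | h
    · exact h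
    exfalso
    apply hx0
    apply hnd
    intro y
    have hy : y ∈ W ⊔ Wo := by rw [hcompl.codisjoint.eq_top]; trivial
    obtain ⟨w, hw, u, hu, rfl⟩ := Submodule.mem_sup.1 hy
    have h1 : q x w = 0 := by rw [hsymm]; exact hx w hw
    have h2 : q x u = 0 := by
      by_contra hab
      have key : ∀ t : ℝ, 2 * t * q x u + q u u ≤ 0 := by
        intro t
        have hmem : t • x + u ∈ Wo := Wo.add_mem (Wo.smul_mem t hx) hu
        have hle := hWo_nonpos _ hmem
        have hux : q u x = q x u := hsymm u x
        have hexp : q (t • x + u) (t • x + u) = 2 * t * q x u + q u u := by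
          simp only [map_add, map_smul, LinearMap.add_apply, LinearMap.smul_apply,
            smul_eq_mul, hux, h]
          ring
        linarith [hexp ▸ hle]
      have hmul : 2 * ((1 - q u u) / (2 * q x u)) * q x u = 1 - q u u := by
        field_simp
      linarith [key ((1 - q u u) / (2 * q x u)), hmul]
    rw [map_add, h1, h2, add_zero]
  -- N ⊔ P is nonnegative
  have hUnonneg : ∀ x ∈ N ⊔ P, 0 ≤ q x x := by
    intro x hx
    obtain ⟨y, hy, z, hz, rfl⟩ := Submodule.mem_sup.1 hx
    have h1 : q y y = 0 := hNall y hy y (hNM hy)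
    have h2 : q y z = 0 := hNall y hy z (hPM hz)
    have h3 : q z y = 0 := by rw [hsymm]; exact h2
    have h4 : 0 ≤ q z z := by
      rcases eq_or_ne z 0 with rfl | hz0
      · simp
      · exact (hPpos z hz hz0).le
    have hexp : q (y + z) (y + z) = q y y + q y z + q z y + q z z := by
      simp only [map_add, LinearMap.add_apply]
      ring
    rw [hexp, h1, h2, h3]
    linarith
  have hinfNP : N ⊓ P = ⊥ := by
    rw [eq_bot_iff]
    rintro z ⟨hzN, hzP⟩
    rcases eq_or_ne z 0 with rfl | hz0
    · simp
    · exact absurd (hNall z hzN z (hNM hzN)) (ne_of_gt (hPpos z hzP hz0))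
  have hUW : (N ⊔ P) ⊓ Wo = ⊥ := by
    rw [eq_bot_iff]
    rintro z ⟨hzU, hzWo⟩
    rcases eq_or_ne z 0 with rfl | hz0
    · simp
    · exact absurd (hUnonneg z hzU) (not_le.2 (hWo_neg z hzWo hz0))
  -- dimension count
  have hUrank : finrank ℝ N + finrank ℝ P ≤ p := by
    have h1 := Submodule.finrank_sup_add_finrank_inf_eq N P
    have h2 := Submodule.finrank_sup_add_finrank_inf_eq (N ⊔ P) Wo
    rw [hinfNP, finrank_bot, add_zero] at h1
    rw [hUW, finrank_bot, add_zero] at h2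
    have h3 : finrank ℝ ↥((N ⊔ P) ⊔ Wo) ≤ n := hn ▸ Submodule.finrank_le _
    omega
  have hcard : Fintype.card {i // pos i} + Fintype.card {i // ¬ pos i} = m := by
    have h1 := Fintype.card_subtype_compl pos
    have h2 : Fintype.card {i // pos i} ≤ Fintype.card (Fin m) :=
      Fintype.card_subtype_le _
    rw [Fintype.card_fin] at *
    omega
  omega
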